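/- Under the interference-alignment hypotheses, let X_1, …, X_p (p ≥ 1) be pairwise disjoint nonempty subsets of {1,…,k} such that Σ_{ν∈X_i} rowSpace(S_ν) = 𝔽^l for every i ∈ {2,…,p}. Then every one of the r^p matrices Δ_{u_1 u_2 ⋯ u_p} = Γ_{1,u_1} · Γ_{2,u_2} ⋯ Γ_{p,u_p}, for (u_1,…,u_p) ∈ {1,…,r}^p, is a non-zero matrix. -/

import Mathlib

/-!
Write `V_ν` for the row space of `S_ν`. For `ν ∈ X_i` and `u ≠ 1`, right multiplication by
`Γ_{i,u} = ∑_{j ∈ X_i} C_{u,j}` is injective on `V_ν`: the terms with `j ≠ ν` map `V_ν` into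
`V_ν = rowSpace (S_ν C_{1,ν})`, while `C_{u,ν}` is invertible and maps `V_ν` onto
`rowSpace (S_ν C_{u,ν})`, which meets the former trivially. Every factor `Γ_{j,u}` with `j ≠ i`
maps `V_ν` into itself, since `X_j` and `X_i` are disjoint.

Now induct on the number of factors. If `Δ' Γ_{i,u} = 0` for a nonzero prefix `Δ'`, then
`V_ν Δ' ⊆ V_ν` and injectivity force `V_ν Δ' = 0` for all `ν ∈ X_i`. For `i ≥ 2` these `V_ν` span
`𝔽^l`, so `Δ' = 0`; for `i = 1` we have `Δ' = I`, and `V_ν ≠ 0` because the spaces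
`rowSpace (S_ν C_{u,ν})` fill `𝔽^l`.
-/

open Matrix Submodule

section Semiring

variable {R : Type*} [Semiring R] {m n : Type*} [Fintype n]

theorem span_range_mul {o : Type*} (M : Matrix m n R) (D : Matrix n o R) :
    span R (Set.range (M * D)) = (span R (Set.range M)).map D.vecMulLinear := by
  rw [Submodule.map_span]
  congr 1
  ext y
  exact ⟨fun ⟨i, hi⟩ => ⟨M i, ⟨i, rfl⟩, hi⟩, fun ⟨_, ⟨i, rfl⟩, hi⟩ => ⟨i, hi⟩⟩

theorem vecMul_mem_of_span_range_mul_eq {M : Matrix m n R} {D : Matrix n n R}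
    (hD : span R (Set.range (M * D)) = span R (Set.range M)) {x : n → R}
    (hx : x ∈ span R (Set.range M)) : x ᵥ* D ∈ span R (Set.range M) := by
  rw [← hD, span_range_mul]
  exact mem_map_of_mem hx

theorem span_range_ne_bot_of_iSup_span_range_mul_eq_top [Nontrivial R] [Nonempty n]
    {κ : Type*} {S : Matrix m n R} {C : κ → Matrix n n R}
    (h : ⨆ u, span R (Set.range (S * C u)) = ⊤) : span R (Set.range S) ≠ ⊥ := by
  intro hbot
  simp only [span_range_mul, hbot, Submodule.map_bot, iSup_bot] at h
  exact bot_ne_top h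

variable [DecidableEq n]

theorem vecMul_list_prod_mem {V : Submodule R (n → R)} {L : List (Matrix n n R)}
    (hL : ∀ M ∈ L, ∀ x ∈ V, x ᵥ* M ∈ V) {x : n → R} (hx : x ∈ V) : x ᵥ* L.prod ∈ V := by
  induction L generalizing x with
  | nil => simpa using hx
  | cons M L ih =>
    rw [List.prod_cons, ← vecMul_vecMul]
    exact ih (fun N hN => hL N (List.mem_cons_of_mem M hN)) (hL M List.mem_cons_self x hx)

theorem list_prod_ofFn_ne_zero [Nontrivial R] [Nonempty n] {ι : Type*} {p : ℕ}
    {G : Fin p → Matrix n n R} {X : Fin p → Finset ι} {V : ι → Submodule R (n → R)}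
    (hXne : ∀ i, (X i).Nonempty) (hV : ∀ ν, V ν ≠ ⊥)
    (hinj : ∀ i, ∀ ν ∈ X i, ∀ x ∈ V ν, x ᵥ* G i = 0 → x = 0)
    (hpres : ∀ i j, i ≠ j → ∀ ν ∈ X j, ∀ x ∈ V ν, x ᵥ* G i ∈ V ν)
    (hspan : ∀ i : Fin p, (i : ℕ) ≠ 0 → ⨆ ν ∈ X i, V ν = ⊤) :
    (List.ofFn G).prod ≠ 0 := by
  induction p with
  | zero => simp
  | succ p ih =>
    intro hprod
    rw [List.ofFn_succ', List.prod_concat] at hprod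
    set A := (List.ofFn fun i => G (Fin.castSucc i)).prod
    have hkill : ∀ ν ∈ X (Fin.last p), ∀ x ∈ V ν, x ᵥ* A = 0 := by
      intro ν hν x hx
      refine hinj _ ν hν _ (vecMul_list_prod_mem ?_ hx) (by rw [vecMul_vecMul, hprod, vecMul_zero])
      rintro M hM
      obtain ⟨i, rfl⟩ := (List.mem_ofFn' _ _).mp hM
      exact hpres _ _ (Fin.castSucc_lt_last i).ne ν hν
    rcases Nat.eq_zero_or_pos p with rfl | hp
    · obtain ⟨ν, hν⟩ := hXne (Fin.last 0)
      refine hV ν ((Submodule.eq_bot_iff _).mpr fun x hx => ?_)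
      simpa [A] using hkill ν hν x hx
    · refine ih (G := fun i => G i.castSucc) (X := fun i => X i.castSucc) (fun i => hXne _)
        (fun i => hinj _) (fun i j hij => hpres _ _ ((Fin.castSucc_injective p).ne hij))
        (fun i hi => hspan _ hi) ?_
      have hker : (⊤ : Submodule R (n → R)) ≤ LinearMap.ker A.vecMulLinear := by
        rw [← hspan (Fin.last p) (by rw [Fin.val_last]; omega)]
        exact iSup₂_le fun ν hν x hx => hkill ν hν x hx
      exact ext_iff_vecMul.mpr fun x => by simpa [A] using hker (mem_top (x := x))

end Semiring

theorem eq_zero_of_vecMul_sum_eq_zero {R : Type*} [Ring R] {m n ι κ : Type*} [Fintype n]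
    [DecidableEq n] {S : ι → Matrix m n R} {C : κ → ι → Matrix n n R}
    {u₀ w : κ} {ν : ι} {s : Finset ι} (hC₀ : C u₀ ν = 1) (hw : w ≠ u₀) (hCw : IsUnit (C w ν))
    (hindep : iSupIndep fun u => span R (Set.range (S ν * C u ν)))
    (hstab : ∀ j ∈ s, j ≠ ν → span R (Set.range (S ν * C w j)) = span R (Set.range (S ν)))
    (hν : ν ∈ s) {x : n → R} (hx : x ∈ span R (Set.range (S ν)))
    (h : x ᵥ* ∑ j ∈ s, C w j = 0) : x = 0 := by
  classical
  rw [vecMul_sum, ← Finset.add_sum_erase _ _ hν, add_eq_zero_iff_eq_neg] at h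
  have hmem_w : x ᵥ* C w ν ∈ span R (Set.range (S ν * C w ν)) := by
    rw [span_range_mul]
    exact mem_map_of_mem hx
  have hmem_rest : x ᵥ* C w ν ∈ ⨆ (u) (_ : u ≠ w), span R (Set.range (S ν * C u ν)) := by
    refine le_iSup₂ (f := fun u (_ : u ≠ w) => span R (Set.range (S ν * C u ν))) u₀ hw.symm ?_
    rw [hC₀, Matrix.mul_one, h]
    exact neg_mem <| sum_mem fun j hj =>
      vecMul_mem_of_span_range_mul_eq
        (hstab j (Finset.mem_of_mem_erase hj) (Finset.ne_of_mem_erase hj)) hx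
  have hzero : x ᵥ* C w ν = 0 := disjoint_def.mp (hindep w) _ hmem_w hmem_rest
  exact vecMul_injective_of_isUnit hCw (hzero.trans (zero_vecMul _).symm)

theorem stmt_10 {𝔽 : Type*} [Field 𝔽] (k r l : ℕ)
    (hr : 2 ≤ r) (hl : 0 < l)
    (S : Fin k → Matrix (Fin (l / r)) (Fin l) 𝔽)
    (C : Fin r → Fin k → Matrix (Fin l) (Fin l) 𝔽)
    (hCinv : ∀ u j, IsUnit (C u j))
    (hC1 : ∀ j, C ⟨0, by omega⟩ j = 1)
    (hIA1 : ∀ (i j : Fin k), j ≠ i → ∀ u : Fin r,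
      Submodule.span 𝔽 (Set.range (S i * C u j)) = Submodule.span 𝔽 (Set.range (S i)))
    (hIA2 : ∀ i : Fin k, iSupIndep
      fun u : Fin r => Submodule.span 𝔽 (Set.range (S i * C u i)))
    (hIA3 : ∀ i : Fin k,
      (⨆ u : Fin r, Submodule.span 𝔽 (Set.range (S i * C u i))) = ⊤)
    (p : ℕ) (X : Fin p → Finset (Fin k))
    (hXne : ∀ i, (X i).Nonempty)
    (hXdisj : ∀ i j, i ≠ j → Disjoint (X i) (X j))
    (hXspan : ∀ i : Fin p, (i : ℕ) ≠ 0 →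
      (⨆ ν ∈ X i, Submodule.span 𝔽 (Set.range (S ν))) = ⊤)
    (Γ : Fin p → Fin r → Matrix (Fin l) (Fin l) 𝔽)
    (hΓ : ∀ i u, Γ i u =
      if (u : ℕ) = 0 then (1 : Matrix (Fin l) (Fin l) 𝔽) else ∑ j ∈ X i, C u j) :
    ∀ u : Fin p → Fin r, (List.ofFn (fun i : Fin p => Γ i (u i))).prod ≠ 0 := by
  intro u
  have : Nonempty (Fin l) := ⟨⟨0, hl⟩⟩
  refine list_prod_ofFn_ne_zero (V := fun ν => span 𝔽 (Set.range (S ν))) hXne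
    (fun ν => span_range_ne_bot_of_iSup_span_range_mul_eq_top (hIA3 ν)) ?_ ?_ hXspan
  · intro i ν hν x hx hx0
    rw [hΓ] at hx0
    split_ifs at hx0 with hu
    · simpa using hx0
    · exact eq_zero_of_vecMul_sum_eq_zero (hC1 ν) (Fin.ne_of_val_ne hu) (hCinv _ _) (hIA2 ν)
        (fun j _ hj => hIA1 ν j hj _) hν hx hx0
  · intro i j hij ν hν x hx
    rw [hΓ]
    split_ifs
    · simpa using hx
    · rw [vecMul_sum]
      exact sum_mem fun j' hj' => vecMul_mem_of_span_range_mul_eq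
        (hIA1 ν j' (ne_of_mem_of_not_mem hj' (Finset.disjoint_right.mp (hXdisj i j hij) hν)) _) hx
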